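/- arXiv:1910.06775 — 3 statements merged into one kernel-verified Lean document; each statement's English description precedes it below -/
import Mathlib

section
/- For any bounded operator T on a complex Hilbert space, ‖ |T|² + |T*|² ‖ + 2‖T²‖ ≤ (‖T‖ + ‖T²‖^{1/2})². -/
/-!
Write `A = |T|` and `B = |T*|`. Both are self-adjoint with `‖A‖ = ‖B‖ = ‖T‖`, and the C*-identity
gives `‖AB‖ = ‖TB‖ = ‖T²‖` because `A² = T*T` and `B² = TT*`. For self-adjoint `A`, `B` one has
Kittaneh's bound `‖A² + B²‖ ≤ c := max (‖A‖², ‖B‖²) + ‖AB‖`: with `y = (A² + B²) x`,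
`‖y‖² = ‖A (Ax) + B (Bx)‖² ≤ c (‖Ax‖² + ‖Bx‖²) = c re⟪y, x⟫ ≤ c ‖y‖ ‖x‖`, where the middle step
expands the square and moves `A` across the cross term `⟪A (Ax), B (Bx)⟫ = ⟪Ax, AB (Bx)⟫`.
Hence `‖|T|² + |T*|²‖ ≤ ‖T‖² + ‖T²‖`, and the theorem follows from `‖T²‖ ≤ ‖T‖ ‖T²‖^{1/2}`.
-/

/-- `|T| = (T*T)^{1/2}` via the continuous functional calculus. -/
noncomputable def absOp {H : Type*} [NormedAddCommGroup H] [InnerProductSpace ℂ H]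
    [CompleteSpace H] (X : H →L[ℂ] H) : H →L[ℂ] H :=
  cfc Real.sqrt (star X * X)

open scoped InnerProductSpace

section CStarRing

variable {R : Type*} [NonUnitalNormedRing R] [StarRing R] [CStarRing R]

theorem CStarRing.norm_mul_eq_of_star_mul_self_eq {a c : R} (h : star a * a = star c * c)
    (b : R) : ‖a * b‖ = ‖c * b‖ := by
  have key : ∀ x : R, star (x * b) * (x * b) = star b * (star x * x) * b := fun x => by
    simp only [star_mul, mul_assoc]
  rw [← mul_self_inj_of_nonneg (norm_nonneg _) (norm_nonneg _), ← CStarRing.norm_star_mul_self,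
    ← CStarRing.norm_star_mul_self, key, key, h]

theorem CStarRing.norm_mul_eq_of_mul_star_self_eq {a c : R} (h : a * star a = c * star c)
    (b : R) : ‖b * a‖ = ‖b * c‖ := by
  have key : ∀ x : R, (b * x) * star (b * x) = b * (x * star x) * star b := fun x => by
    simp only [star_mul, mul_assoc]
  rw [← mul_self_inj_of_nonneg (norm_nonneg _) (norm_nonneg _), ← CStarRing.norm_self_mul_star,
    ← CStarRing.norm_self_mul_star, key, key, h]

end CStarRing

namespace ContinuousLinearMap

variable {𝕜 E : Type*} [RCLike 𝕜] [NormedAddCommGroup E] [InnerProductSpace 𝕜 E]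

theorem norm_apply_add_apply_sq_le {A : E →L[𝕜] E} (hA : (A : E →ₗ[𝕜] E).IsSymmetric)
    (B : E →L[𝕜] E) (u v : E) :
    ‖A u + B v‖ ^ 2 ≤ (max (‖A‖ ^ 2) (‖B‖ ^ 2) + ‖A * B‖) * (‖u‖ ^ 2 + ‖v‖ ^ 2) := by
  have hAu : ‖A u‖ ^ 2 ≤ max (‖A‖ ^ 2) (‖B‖ ^ 2) * ‖u‖ ^ 2 := by
    grw [le_opNorm, mul_pow, ← le_max_left]
  have hBv : ‖B v‖ ^ 2 ≤ max (‖A‖ ^ 2) (‖B‖ ^ 2) * ‖v‖ ^ 2 := by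
    grw [le_opNorm, mul_pow, ← le_max_right]
  have hcross : RCLike.re ⟪A u, B v⟫_𝕜 ≤ ‖u‖ * (‖A * B‖ * ‖v‖) :=
    calc RCLike.re ⟪A u, B v⟫_𝕜 = RCLike.re ⟪u, (A * B) v⟫_𝕜 := congrArg _ (hA u (B v))
      _ ≤ ‖u‖ * ‖(A * B) v‖ := (RCLike.re_le_norm _).trans (norm_inner_le_norm _ _)
      _ ≤ ‖u‖ * (‖A * B‖ * ‖v‖) := by grw [le_opNorm]
  rw [@norm_add_sq 𝕜]
  nlinarith [two_mul_le_add_sq ‖u‖ ‖v‖, norm_nonneg (A * B)]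

theorem norm_sq_add_sq_le {A B : E →L[𝕜] E} (hA : (A : E →ₗ[𝕜] E).IsSymmetric)
    (hB : (B : E →ₗ[𝕜] E).IsSymmetric) :
    ‖A ^ 2 + B ^ 2‖ ≤ max (‖A‖ ^ 2) (‖B‖ ^ 2) + ‖A * B‖ := by
  set c := max (‖A‖ ^ 2) (‖B‖ ^ 2) + ‖A * B‖
  have hc : 0 ≤ c := by positivity
  refine opNorm_le_bound _ hc fun x => ?_
  set y := (A ^ 2 + B ^ 2) x
  have hy : y = A (A x) + B (B x) := by simp [y, pow_two]
  have hre : ‖A x‖ ^ 2 + ‖B x‖ ^ 2 = RCLike.re ⟪y, x⟫_𝕜 := by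
    rw [hy, inner_add_left, ← coe_coe A, hA, ← coe_coe B, hB, coe_coe, coe_coe, map_add,
      ← @inner_self_eq_norm_sq 𝕜, ← @inner_self_eq_norm_sq 𝕜]
  have hsq : ‖y‖ ^ 2 ≤ c * (‖y‖ * ‖x‖) :=
    calc ‖y‖ ^ 2 ≤ c * (‖A x‖ ^ 2 + ‖B x‖ ^ 2) := hy ▸ norm_apply_add_apply_sq_le hA B _ _
      _ ≤ c * (‖y‖ * ‖x‖) := by
        rw [hre]; gcongr; exact (RCLike.re_le_norm _).trans (norm_inner_le_norm _ _)
  nlinarith [norm_nonneg y, mul_nonneg hc (norm_nonneg x)]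

end ContinuousLinearMap

section absOp

variable {H : Type*} [NormedAddCommGroup H] [InnerProductSpace ℂ H] [CompleteSpace H]

theorem absOp_nonneg (X : H →L[ℂ] H) : 0 ≤ absOp X :=
  cfc_nonneg fun x _ => Real.sqrt_nonneg x

theorem isSelfAdjoint_absOp (X : H →L[ℂ] H) : IsSelfAdjoint (absOp X) :=
  .of_nonneg (absOp_nonneg X)

theorem absOp_sq (X : H →L[ℂ] H) : absOp X ^ 2 = star X * X := by
  have hX : 0 ≤ star X * X := star_mul_self_nonneg X
  rw [absOp, ← cfc_pow Real.sqrt 2 (star X * X), cfc_congr (g := id), cfc_id ℝ (star X * X)]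
  exact fun x hx => Real.sq_sqrt (spectrum_nonneg_of_nonneg hX hx)

theorem star_absOp_mul_self (X : H →L[ℂ] H) : star (absOp X) * absOp X = star X * X := by
  rw [(isSelfAdjoint_absOp X).star_eq, ← pow_two, absOp_sq]

theorem norm_absOp (X : H →L[ℂ] H) : ‖absOp X‖ = ‖X‖ := by
  simpa using CStarRing.norm_mul_eq_of_star_mul_self_eq (star_absOp_mul_self X) 1

theorem norm_absOp_mul_absOp_star (T : H →L[ℂ] H) : ‖absOp T * absOp (star T)‖ = ‖T ^ 2‖ := by
  have hB : absOp (star T) * star (absOp (star T)) = T * star T := by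
    rw [(isSelfAdjoint_absOp _).star_eq, ← pow_two, absOp_sq, star_star]
  rw [CStarRing.norm_mul_eq_of_star_mul_self_eq (star_absOp_mul_self T),
    CStarRing.norm_mul_eq_of_mul_star_self_eq hB, pow_two]

end absOp

/-- For any bounded operator `T`, `‖|T|² + |T*|²‖ + 2‖T²‖ ≤ (‖T‖ + ‖T²‖^{1/2})²`. -/
theorem norm_sq_abs_add_two_norm_sq_le {H : Type*} [NormedAddCommGroup H]
    [InnerProductSpace ℂ H] [CompleteSpace H] (T : H →L[ℂ] H) :
    ‖absOp T ^ 2 + absOp (star T) ^ 2‖ + 2 * ‖T ^ 2‖ ≤ (‖T‖ + Real.sqrt ‖T ^ 2‖) ^ 2 := by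
  have hkittaneh : ‖absOp T ^ 2 + absOp (star T) ^ 2‖ ≤ ‖T‖ ^ 2 + ‖T ^ 2‖ := by
    simpa [norm_absOp, norm_absOp_mul_absOp_star] using
      ContinuousLinearMap.norm_sq_add_sq_le (isSelfAdjoint_absOp T).isSymmetric
        (isSelfAdjoint_absOp (star T)).isSymmetric
  have hsqrt : Real.sqrt ‖T ^ 2‖ ≤ ‖T‖ :=
    (Real.sqrt_le_left (norm_nonneg T)).mpr (norm_pow_le' T two_pos)
  nlinarith [Real.sq_sqrt (norm_nonneg (T ^ 2)), Real.sqrt_nonneg ‖T ^ 2‖]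
end

section
/- Let T = (T_{ij}) be an n×n operator matrix with entries T_{ij} ∈ B(H), acting on the direct sum of n copies of H. Then w(T) ≤ w(T'), where T' is the n×n complex matrix with entries t'_{ij} = ‖T_{ij}‖. -/
/-! For a unit vector `x` of `⊕ⁿ H`, the triangle inequality and Cauchy–Schwarz bound
`‖⟪T x, x⟫‖` by `∑ i j, ‖x i‖ ‖M i j‖ ‖x j‖`, which is exactly `⟪T' u, u⟫` for the unit vector
`u = (‖x i‖)ᵢ` of `ℂⁿ`. -/

/-- The numerical radius of an operator on a complex Hilbert space. -/
noncomputable def nr {H : Type*} [NormedAddCommGroup H] [InnerProductSpace ℂ H]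
    (T : H →L[ℂ] H) : ℝ :=
  sSup {r : ℝ | ∃ x : H, ‖x‖ = 1 ∧ r = ‖(inner ℂ (T x) x : ℂ)‖}

open Matrix WithLp
open scoped InnerProductSpace

section NumericalRadius

variable {H : Type*} [NormedAddCommGroup H] [InnerProductSpace ℂ H]

lemma nr_nonneg (T : H →L[ℂ] H) : 0 ≤ nr T :=
  Real.sSup_nonneg <| by rintro _ ⟨x, -, rfl⟩; positivity

lemma norm_inner_apply_self_le_opNorm (T : H →L[ℂ] H) {x : H} (hx : ‖x‖ = 1) :
    ‖⟪T x, x⟫_ℂ‖ ≤ ‖T‖ :=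
  calc ‖⟪T x, x⟫_ℂ‖ ≤ ‖T x‖ * ‖x‖ := norm_inner_le_norm _ _
    _ ≤ ‖T‖ * ‖x‖ * ‖x‖ := by gcongr; exact T.le_opNorm x
    _ = ‖T‖ := by rw [hx, mul_one, mul_one]

lemma norm_inner_apply_self_le_nr (T : H →L[ℂ] H) {x : H} (hx : ‖x‖ = 1) :
    ‖⟪T x, x⟫_ℂ‖ ≤ nr T :=
  le_csSup ⟨‖T‖, by rintro _ ⟨y, hy, rfl⟩; exact norm_inner_apply_self_le_opNorm T hy⟩
    ⟨x, hx, rfl⟩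

lemma nr_le_of_forall_norm_inner_apply_self_le (T : H →L[ℂ] H) {c : ℝ} (hc : 0 ≤ c)
    (h : ∀ x : H, ‖x‖ = 1 → ‖⟪T x, x⟫_ℂ‖ ≤ c) : nr T ≤ c :=
  Real.sSup_le (by rintro _ ⟨x, hx, rfl⟩; exact h x hx) hc

end NumericalRadius

section OperatorMatrix

variable {𝕜 ι : Type*} [RCLike 𝕜] [Fintype ι]

lemma norm_inner_apply_self_le_of_operatorMatrix {E : ι → Type*}
    [∀ i, NormedAddCommGroup (E i)] [∀ i, InnerProductSpace 𝕜 (E i)]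
    {M : ∀ i j, E j →L[𝕜] E i} {T : PiLp 2 E →L[𝕜] PiLp 2 E}
    (hT : ∀ x i, T x i = ∑ j, M i j (x j)) (x : PiLp 2 E) :
    ‖⟪T x, x⟫_𝕜‖ ≤ ∑ i, ‖x i‖ * ∑ j, ‖M i j‖ * ‖x j‖ := by
  have hTx : ⟪T x, x⟫_𝕜 = ∑ i, ∑ j, ⟪M i j (x j), x i⟫_𝕜 := by
    simp only [PiLp.inner_apply, hT, sum_inner]
  rw [hTx]
  refine (norm_sum_le _ _).trans <| Finset.sum_le_sum fun i _ => ?_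
  rw [Finset.mul_sum]
  refine (norm_sum_le _ _).trans <| Finset.sum_le_sum fun j _ => ?_
  calc ‖⟪M i j (x j), x i⟫_𝕜‖ ≤ ‖M i j (x j)‖ * ‖x i‖ := norm_inner_le_norm _ _
    _ ≤ ‖M i j‖ * ‖x j‖ * ‖x i‖ := by gcongr; exact (M i j).le_opNorm _
    _ = ‖x i‖ * (‖M i j‖ * ‖x j‖) := by ring

lemma norm_toLp_ofReal_norm {E : ι → Type*} [∀ i, NormedAddCommGroup (E i)] (x : PiLp 2 E) :
    ‖(toLp 2 fun i => (‖x i‖ : 𝕜) : EuclideanSpace 𝕜 ι)‖ = ‖x‖ := by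
  simp only [EuclideanSpace.norm_eq, PiLp.norm_eq_of_L2, RCLike.norm_ofReal, abs_norm]

lemma inner_toEuclideanCLM_map_ofReal [DecidableEq ι] (B : Matrix ι ι ℝ) (v : ι → ℝ) :
    ⟪toEuclideanCLM (𝕜 := 𝕜) (B.map (algebraMap ℝ 𝕜)) (toLp 2 (algebraMap ℝ 𝕜 ∘ v)),
      toLp 2 (algebraMap ℝ 𝕜 ∘ v)⟫_𝕜 = algebraMap ℝ 𝕜 (v ⬝ᵥ B *ᵥ v) := by
  rw [toEuclideanCLM_toLp, EuclideanSpace.inner_toLp_toLp, RingHom.map_dotProduct]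
  congr 1
  ext i
  simp [← RingHom.map_mulVec]

end OperatorMatrix

/-- If `T` is the `n × n` operator matrix with entries `M i j`, acting on `⊕ⁿ H`,
then `w(T) ≤ w((‖M i j‖))`. -/
theorem nr_le_nr_norm_matrix (n : ℕ) {H : Type*} [NormedAddCommGroup H]
    [InnerProductSpace ℂ H] (M : Fin n → Fin n → (H →L[ℂ] H))
    (T : (PiLp 2 fun _ : Fin n => H) →L[ℂ] (PiLp 2 fun _ : Fin n => H))
    (hT : ∀ x, ∀ i, T x i = ∑ j, M i j (x j)) :
    nr T ≤ nr (Matrix.toEuclideanCLM (𝕜 := ℂ) (Matrix.of fun i j => (‖M i j‖ : ℂ))) := by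
  refine nr_le_of_forall_norm_inner_apply_self_le T (nr_nonneg _) fun x hx => ?_
  let v : Fin n → ℝ := fun i => ‖x i‖
  let B : Matrix (Fin n) (Fin n) ℝ := of fun i j => ‖M i j‖
  have hTx : ‖⟪T x, x⟫_ℂ‖ ≤ v ⬝ᵥ B *ᵥ v := norm_inner_apply_self_le_of_operatorMatrix hT x
  have hv : ‖(toLp 2 fun i => (‖x i‖ : ℂ) : EuclideanSpace ℂ (Fin n))‖ = 1 :=
    (norm_toLp_ofReal_norm x).trans hx
  calc ‖⟪T x, x⟫_ℂ‖ ≤ v ⬝ᵥ B *ᵥ v := hTx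
    _ = ‖⟪toEuclideanCLM (𝕜 := ℂ) (B.map (algebraMap ℝ ℂ)) (toLp 2 (algebraMap ℝ ℂ ∘ v)),
          toLp 2 (algebraMap ℝ ℂ ∘ v)⟫_ℂ‖ := by
      rw [inner_toEuclideanCLM_map_ofReal, Complex.coe_algebraMap, Complex.norm_real,
        Real.norm_of_nonneg ((norm_nonneg _).trans hTx)]
    _ ≤ _ := norm_inner_apply_self_le_nr _ hv
end

section
/- Let A > 0, B = diag(A,A), T₁₂, T₂₁ admitting A-adjoints, T = [[0, T₁₂],[T₂₁, 0]]. Then w_B(T) ≤ (1/2)√(‖T₁₂^{♯}T₁₂ + T₂₁T₂₁^{♯}‖_A + 2 w_A(T₂₁T₁₂)). -/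
open scoped ComplexOrder

/-- The A-numerical radius: `w_A(T) = sup{|⟨ATx,x⟩| : ⟨Ax,x⟩ = 1}` (with the paper's
convention `⟨u,v⟩ = inner v u` in Mathlib's notation). -/
noncomputable def wA {H : Type*} [NormedAddCommGroup H] [InnerProductSpace ℂ H]
    (A T : H →L[ℂ] H) : ℝ :=
  sSup {r : ℝ | ∃ x : H, (inner ℂ x (A x) : ℂ) = 1 ∧ r = ‖(inner ℂ x (A (T x)) : ℂ)‖}

/-- The A-Crawford number: `m_A(T) = inf{|⟨ATx,x⟩| : ⟨Ax,x⟩ = 1}`. -/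
noncomputable def mA {H : Type*} [NormedAddCommGroup H] [InnerProductSpace ℂ H]
    (A T : H →L[ℂ] H) : ℝ :=
  sInf {r : ℝ | ∃ x : H, (inner ℂ x (A x) : ℂ) = 1 ∧ r = ‖(inner ℂ x (A (T x)) : ℂ)‖}

/-- The A-operator seminorm: `‖T‖_A = sup{‖Tx‖_A/‖x‖_A : x ∈ closure (range A), x ≠ 0}`. -/
noncomputable def normA {H : Type*} [NormedAddCommGroup H] [InnerProductSpace ℂ H]
    (A T : H →L[ℂ] H) : ℝ :=
  sSup {r : ℝ | ∃ x ∈ closure (Set.range A), x ≠ 0 ∧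
    r = Real.sqrt ((inner ℂ (T x) (A (T x)) : ℂ)).re / Real.sqrt ((inner ℂ x (A x) : ℂ)).re}

/-!
Factor `A = C† C` (possible since `A ≥ 0`), so that `⟪x, A y⟫ = ⟪C x, C y⟫` and `‖x‖_A = ‖C x‖`.
For a `B`-unit vector `x = (x₀, x₁)`, `⟪x, B T x⟫ = ⟪C x₀, u⟫ + conj ⟪C x₀, w⟫` with
`u = C T₁₂ x₁` and `w = C T₂₁^♯ x₁`. Rotating `u` and `w` by phases and applying Cauchy–Schwarz
gives `|⟪x, B T x⟫|² ≤ ‖x₀‖_A² (‖u‖² + ‖w‖² + 2 |⟪u, w⟫|)`, where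
`‖u‖² + ‖w‖² = ⟪x₁, (T₁₂^♯ T₁₂ + T₂₁ T₂₁^♯) x₁⟫_A ≤ ‖T₁₂^♯ T₁₂ + T₂₁ T₂₁^♯‖_A ‖x₁‖_A²` and
`|⟪u, w⟫| = |⟪T₂₁ T₁₂ x₁, x₁⟫_A| ≤ w_A(T₂₁ T₁₂) ‖x₁‖_A²`; finally `‖x₀‖_A² ‖x₁‖_A² ≤ 1/4`.
The suprema defining `‖·‖_A` and `w_A` are finite because an `A`-selfadjoint `P` satisfies
`‖P x‖_A ≤ ‖P‖ ‖x‖_A`.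
-/

open scoped InnerProductSpace ComplexConjugate

theorem le_of_forall_pow_two_pow_mul_le {a b c K : ℝ} (hb : 0 ≤ b) (hc : 0 < c)
    (h : ∀ n : ℕ, a ^ 2 ^ n * c ≤ K * b ^ 2 ^ n) : a ≤ b := by
  by_contra! hba
  rcases hb.eq_or_lt with rfl | hb
  · have h0 := h 0
    rw [pow_zero, pow_one, pow_one, mul_zero] at h0
    nlinarith
  obtain ⟨n, hn⟩ := pow_unbounded_of_one_lt (K / c) ((one_lt_div hb).2 hba)
  have hgrow : (a / b) ^ n ≤ (a / b) ^ 2 ^ n :=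
    pow_le_pow_right₀ ((one_lt_div hb).2 hba).le Nat.lt_two_pow_self.le
  have hbound : (a / b) ^ 2 ^ n ≤ K / c := by
    rw [div_pow, div_le_div_iff₀ (by positivity) hc]
    exact h n
  linarith

theorem pow_two_pow_mul_le_of_sq_le {f : ℕ → ℝ} (hf : ∀ k, 0 ≤ f k)
    (h : ∀ k, f k ^ 2 ≤ f 0 * f (2 * k)) (n : ℕ) :
    f 1 ^ 2 ^ n * f 0 ≤ f (2 ^ n) * f 0 ^ 2 ^ n := by
  rcases (hf 0).eq_or_lt with h0 | h0
  · simp [← h0]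
  induction n with
  | zero => simp
  | succ n ih =>
    refine le_of_mul_le_mul_left ?_ h0
    calc f 0 * (f 1 ^ 2 ^ (n + 1) * f 0) = (f 1 ^ 2 ^ n * f 0) ^ 2 := by ring
      _ ≤ (f (2 ^ n) * f 0 ^ 2 ^ n) ^ 2 := pow_le_pow_left₀ (by positivity [hf 1]) ih 2
      _ = f (2 ^ n) ^ 2 * f 0 ^ 2 ^ (n + 1) := by ring
      _ ≤ f 0 * f (2 * 2 ^ n) * f 0 ^ 2 ^ (n + 1) := by gcongr; exact h _
      _ = f 0 * (f (2 ^ (n + 1)) * f 0 ^ 2 ^ (n + 1)) := by rw [pow_succ' 2 n]; ring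

theorem norm_inner_add_norm_inner_sq_le {𝕜 E : Type*} [RCLike 𝕜] [SeminormedAddCommGroup E]
    [InnerProductSpace 𝕜 E] (x u w : E) :
    (‖⟪x, u⟫_𝕜‖ + ‖⟪x, w⟫_𝕜‖) ^ 2 ≤ ‖x‖ ^ 2 * (‖u‖ ^ 2 + ‖w‖ ^ 2 + 2 * ‖⟪u, w⟫_𝕜‖) := by
  -- Rotate `u` and `w` so that both inner products with `x` become nonnegative reals.
  obtain ⟨α, hα, hαu⟩ := RCLike.exists_norm_eq_mul_self ⟪x, u⟫_𝕜
  obtain ⟨β, hβ, hβw⟩ := RCLike.exists_norm_eq_mul_self ⟪x, w⟫_𝕜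
  have hsum : ‖⟪x, u⟫_𝕜‖ + ‖⟪x, w⟫_𝕜‖ ≤ ‖x‖ * ‖α • u + β • w‖ := by
    calc ‖⟪x, u⟫_𝕜‖ + ‖⟪x, w⟫_𝕜‖ = RCLike.re ⟪x, α • u + β • w⟫_𝕜 := by
          rw [inner_add_right, inner_smul_right, inner_smul_right, ← hαu, ← hβw]; simp
      _ ≤ ‖x‖ * ‖α • u + β • w‖ := re_inner_le_norm (𝕜 := 𝕜) _ _
  have hcross : RCLike.re ⟪α • u, β • w⟫_𝕜 ≤ ‖⟪u, w⟫_𝕜‖ :=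
    (RCLike.re_le_norm _).trans (by simp [inner_smul_left, inner_smul_right, hα, hβ])
  have hz : ‖α • u + β • w‖ ^ 2 ≤ ‖u‖ ^ 2 + ‖w‖ ^ 2 + 2 * ‖⟪u, w⟫_𝕜‖ := by
    rw [norm_add_sq (𝕜 := 𝕜), norm_smul, norm_smul, hα, hβ]
    linarith
  calc (‖⟪x, u⟫_𝕜‖ + ‖⟪x, w⟫_𝕜‖) ^ 2 ≤ (‖x‖ * ‖α • u + β • w‖) ^ 2 :=
        pow_le_pow_left₀ (by positivity) hsum 2
    _ = ‖x‖ ^ 2 * ‖α • u + β • w‖ ^ 2 := mul_pow _ _ _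
    _ ≤ _ := by gcongr

theorem SemiconjBy.star_swap {R : Type*} [Mul R] [StarMul R] {a x y : R} (ha : IsSelfAdjoint a)
    (h : SemiconjBy a y (star x)) : SemiconjBy a x (star y) := by
  simpa [ha.star_eq] using h.star_star_star

-- With `A = C† ∘L C`, `SemiconjBy A T' (star T)` says `A T' = T† A`: `T'` is an `A`-adjoint of `T`.
section

variable {𝕜 E F : Type*} [RCLike 𝕜] [NormedAddCommGroup E] [InnerProductSpace 𝕜 E]
  [CompleteSpace E] [NormedAddCommGroup F] [InnerProductSpace 𝕜 F] [CompleteSpace F]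
  (C : E →L[𝕜] F) {T T' : E →L[𝕜] E}

open ContinuousLinearMap

theorem inner_adjoint_comp_self_apply (x y : E) : ⟪x, (adjoint C ∘L C) y⟫_𝕜 = ⟪C x, C y⟫_𝕜 :=
  C.adjoint_inner_right x (C y)

theorem inner_map_apply_eq_of_semiconjBy (hT : SemiconjBy (adjoint C ∘L C) T' (star T)) (x y : E) :
    ⟪C (T x), C y⟫_𝕜 = ⟪C x, C (T' y)⟫_𝕜 := by
  have h : adjoint C (C (T' y)) = adjoint T (adjoint C (C y)) := congr($hT y)
  rw [← C.adjoint_inner_right, ← C.adjoint_inner_right, h, T.adjoint_inner_right]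

theorem sq_norm_map_apply_eq_of_semiconjBy (hT : SemiconjBy (adjoint C ∘L C) T' (star T))
    (x : E) : ‖C (T x)‖ ^ 2 = RCLike.re ⟪C x, C (T' (T x))⟫_𝕜 := by
  rw [← inner_map_apply_eq_of_semiconjBy C hT, inner_self_eq_norm_sq]

theorem sq_norm_map_apply_le_of_semiconjBy (hT : SemiconjBy (adjoint C ∘L C) T' (star T)) (x : E) :
    ‖C (T x)‖ ^ 2 ≤ ‖C x‖ * ‖C (T' (T x))‖ :=
  (sq_norm_map_apply_eq_of_semiconjBy C hT x).trans_le (re_inner_le_norm _ _)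

theorem norm_map_apply_le_of_semiconjBy_star_self {P : E →L[𝕜] E}
    (hP : SemiconjBy (adjoint C ∘L C) P (star P)) (x : E) : ‖C (P x)‖ ≤ ‖P‖ * ‖C x‖ := by
  -- Iterating `‖C (P^k x)‖² ≤ ‖C x‖ ‖C (P^(2k) x)‖` bounds `‖C (P x)‖ ^ 2 ^ n` by
  -- `(‖P‖ ‖C x‖) ^ 2 ^ n` up to a factor independent of `n`.
  set f : ℕ → ℝ := fun k ↦ ‖C ((P ^ k) x)‖
  have hf0 : f 0 = ‖C x‖ := by simp [f]
  have hf1 : f 1 = ‖C (P x)‖ := by simp [f]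
  have hstep (k : ℕ) : f k ^ 2 ≤ f 0 * f (2 * k) := by
    have hPk : SemiconjBy (adjoint C ∘L C) (P ^ k) (star (P ^ k)) := by
      rw [star_pow]; exact hP.pow_right k
    simpa only [f, two_mul, pow_add, pow_zero, mul_apply_eq_comp, one_apply_eq_self] using
      sq_norm_map_apply_le_of_semiconjBy C hPk x
  rcases (norm_nonneg (C x)).eq_or_lt with h0 | h0
  · have h1 := hstep 1
    rw [hf0, ← h0, zero_mul, hf1] at h1
    rw [← h0, mul_zero]
    nlinarith
  refine le_of_forall_pow_two_pow_mul_le (by positivity) h0 (K := ‖C‖ * ‖x‖) fun n ↦ ?_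
  calc ‖C (P x)‖ ^ 2 ^ n * ‖C x‖ = f 1 ^ 2 ^ n * f 0 := by rw [hf0, hf1]
    _ ≤ f (2 ^ n) * f 0 ^ 2 ^ n := pow_two_pow_mul_le_of_sq_le (fun _ ↦ norm_nonneg _) hstep n
    _ ≤ ‖C‖ * ‖P‖ ^ 2 ^ n * ‖x‖ * ‖C x‖ ^ 2 ^ n := by
      rw [hf0]
      gcongr
      calc f (2 ^ n) ≤ ‖C‖ * ‖(P ^ 2 ^ n) x‖ := C.le_opNorm _
        _ ≤ ‖C‖ * (‖P‖ ^ 2 ^ n * ‖x‖) := by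
          gcongr
          exact ((P ^ 2 ^ n).le_opNorm x).trans (by gcongr; exact norm_pow_le' P (by positivity))
        _ = _ := by ring
    _ = ‖C‖ * ‖x‖ * (‖P‖ * ‖C x‖) ^ 2 ^ n := by ring

theorem norm_map_apply_le_sqrt_of_semiconjBy (hT : SemiconjBy (adjoint C ∘L C) T' (star T))
    (x : E) : ‖C (T x)‖ ≤ √‖T' * T‖ * ‖C x‖ := by
  have hT'T : SemiconjBy (adjoint C ∘L C) (T' * T) (star (T' * T)) := by
    rw [star_mul]
    exact hT.mul_right (hT.star_swap (isPositive_adjoint_comp_self C).isSelfAdjoint)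
  have hsq : ‖C (T x)‖ ^ 2 ≤ ‖T' * T‖ * ‖C x‖ ^ 2 :=
    calc ‖C (T x)‖ ^ 2 ≤ ‖C x‖ * ‖C ((T' * T) x)‖ := sq_norm_map_apply_le_of_semiconjBy C hT x
      _ ≤ ‖C x‖ * (‖T' * T‖ * ‖C x‖) := by
        gcongr; exact norm_map_apply_le_of_semiconjBy_star_self C hT'T x
      _ = ‖T' * T‖ * ‖C x‖ ^ 2 := by ring
  rw [← Real.sqrt_sq (norm_nonneg (C x)), ← Real.sqrt_mul (norm_nonneg _)]
  exact Real.le_sqrt_of_sq_le hsq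

end

theorem IsSelfAdjoint.denseRange_of_injective {𝕜 E : Type*} [RCLike 𝕜] [NormedAddCommGroup E]
    [InnerProductSpace 𝕜 E] [CompleteSpace E] {A : E →L[𝕜] E} (hA : IsSelfAdjoint A)
    (hinj : Function.Injective A) : DenseRange A := by
  have h : A.range.topologicalClosure = ⊤ := by
    rw [Submodule.topologicalClosure_eq_top_iff, ContinuousLinearMap.orthogonal_range,
      ← ContinuousLinearMap.star_eq_adjoint, hA.star_eq, LinearMap.ker_eq_bot]
    exact hinj
  have hdense := Submodule.dense_iff_topologicalClosure_eq_top.2 h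
  rwa [LinearMap.coe_range, ContinuousLinearMap.coe_coe] at hdense

section Complex

variable {H F : Type*} [NormedAddCommGroup H] [InnerProductSpace ℂ H]

open ContinuousLinearMap

theorem ContinuousLinearMap.nonneg_of_forall_inner_apply_nonneg {A : H →L[ℂ] H}
    (hA : ∀ x, 0 ≤ ⟪x, A x⟫_ℂ) : 0 ≤ A := by
  have hsymm (x : H) : ⟪A x, x⟫_ℂ = ⟪x, A x⟫_ℂ := by
    rw [← inner_conj_symm]; exact (IsSelfAdjoint.of_nonneg (hA x)).star_eq
  rw [nonneg_iff_isPositive, isPositive_iff]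
  refine ⟨(LinearMap.isSymmetric_iff_inner_map_self_real _).2 fun x ↦ ?_, fun x ↦ ?_⟩
  · simp only [coe_coe, hsymm, inner_conj_symm]
  · rw [hsymm]; exact hA x

theorem normA_nonneg (A T : H →L[ℂ] H) : 0 ≤ normA A T :=
  Real.sSup_nonneg fun _ ⟨_, _, _, hr⟩ ↦ hr ▸ by positivity

theorem wA_nonneg (A T : H →L[ℂ] H) : 0 ≤ wA A T :=
  Real.sSup_nonneg fun _ ⟨_, _, hr⟩ ↦ hr ▸ norm_nonneg _

variable [CompleteSpace H] [NormedAddCommGroup F] [InnerProductSpace ℂ F] [CompleteSpace F]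

theorem sqrt_re_inner_adjoint_comp_self_apply (C : H →L[ℂ] F) (x : H) :
    √(⟪x, (adjoint C ∘L C) x⟫_ℂ).re = ‖C x‖ := by
  rw [inner_adjoint_comp_self_apply, ← RCLike.re_to_complex, inner_self_eq_norm_sq,
    Real.sqrt_sq (norm_nonneg _)]

theorem norm_map_apply_le_normA (C : H →L[ℂ] F) {P : H →L[ℂ] H}
    (hP : SemiconjBy (adjoint C ∘L C) P (star P)) {x : H}
    (hx : x ∈ closure (Set.range (adjoint C ∘L C))) :
    ‖C (P x)‖ ≤ normA (adjoint C ∘L C) P * ‖C x‖ := by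
  have hPC := norm_map_apply_le_of_semiconjBy_star_self C hP
  rcases (norm_nonneg (C x)).eq_or_lt with h0 | h0
  · simpa [← h0] using hPC x
  have hbdd : BddAbove {r | ∃ y ∈ closure (Set.range (adjoint C ∘L C)), y ≠ 0 ∧
      r = √(⟪P y, (adjoint C ∘L C) (P y)⟫_ℂ).re / √(⟪y, (adjoint C ∘L C) y⟫_ℂ).re} := by
    refine ⟨‖P‖, ?_⟩
    rintro _ ⟨y, -, -, rfl⟩
    rw [sqrt_re_inner_adjoint_comp_self_apply, sqrt_re_inner_adjoint_comp_self_apply]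
    exact div_le_of_le_mul₀ (norm_nonneg _) (norm_nonneg _) (hPC y)
  rw [← div_le_iff₀ h0]
  refine le_csSup hbdd ⟨x, hx, ?_, by
    rw [sqrt_re_inner_adjoint_comp_self_apply, sqrt_re_inner_adjoint_comp_self_apply]⟩
  rintro rfl
  simp at h0

theorem norm_inner_apply_le_wA (C : H →L[ℂ] F) {T T' : H →L[ℂ] H}
    (hT : SemiconjBy (adjoint C ∘L C) T' (star T)) (x : H) :
    ‖⟪x, (adjoint C ∘L C) (T x)⟫_ℂ‖ ≤ wA (adjoint C ∘L C) T * ‖C x‖ ^ 2 := by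
  rcases (norm_nonneg (C x)).eq_or_lt with h0 | h0
  · rw [inner_adjoint_comp_self_apply, norm_eq_zero.1 h0.symm]
    simp
  have hbdd : BddAbove {r | ∃ y, ⟪y, (adjoint C ∘L C) y⟫_ℂ = 1 ∧
      r = ‖⟪y, (adjoint C ∘L C) (T y)⟫_ℂ‖} := by
    refine ⟨√‖T' * T‖, ?_⟩
    rintro _ ⟨y, hy, rfl⟩
    rw [inner_adjoint_comp_self_apply, inner_self_eq_norm_sq_to_K] at hy
    have hy' : ‖C y‖ ^ 2 = 1 := Complex.ofReal_injective (by push_cast; exact hy)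
    rw [inner_adjoint_comp_self_apply]
    calc ‖⟪C y, C (T y)⟫_ℂ‖ ≤ ‖C y‖ * ‖C (T y)‖ := norm_inner_le_norm _ _
      _ ≤ ‖C y‖ * (√‖T' * T‖ * ‖C y‖) := by
        gcongr; exact norm_map_apply_le_sqrt_of_semiconjBy C hT y
      _ = √‖T' * T‖ := by linear_combination √‖T' * T‖ * hy'
  rw [← div_le_iff₀ (by positivity)]
  refine le_csSup hbdd ⟨((‖C x‖⁻¹ : ℝ) : ℂ) • x, ?_, ?_⟩
  · rw [inner_adjoint_comp_self_apply, inner_self_eq_norm_sq_to_K, map_smul, norm_smul,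
      Complex.norm_real, norm_inv, norm_norm, inv_mul_cancel₀ h0.ne']
    simp
  · simp only [map_smul, inner_smul_left, inner_smul_right, Complex.conj_ofReal, norm_mul,
      Complex.norm_real, Real.norm_eq_abs, abs_inv, abs_of_pos h0]
    field_simp

theorem norm_inner_offDiag_sq_le (C : H →L[ℂ] F) {T12 T21 T12s T21s : H →L[ℂ] H}
    (h12 : SemiconjBy (adjoint C ∘L C) T12s (star T12))
    (h21 : SemiconjBy (adjoint C ∘L C) T21s (star T21)) (x0 : H) {x1 : H}
    (hx1 : x1 ∈ closure (Set.range (adjoint C ∘L C))) :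
    ‖⟪x0, (adjoint C ∘L C) (T12 x1)⟫_ℂ + ⟪x1, (adjoint C ∘L C) (T21 x0)⟫_ℂ‖ ^ 2 ≤
      ‖C x0‖ ^ 2 * ‖C x1‖ ^ 2 * (normA (adjoint C ∘L C) (T12s * T12 + T21 * T21s) +
        2 * wA (adjoint C ∘L C) (T21 * T12)) := by
  have hA : IsSelfAdjoint (adjoint C ∘L C) := (isPositive_adjoint_comp_self C).isSelfAdjoint
  have h21' := h21.star_swap hA
  have hS : SemiconjBy (adjoint C ∘L C) (T12s * T12 + T21 * T21s)
      (star (T12s * T12 + T21 * T21s)) := by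
    rw [star_add, star_mul, star_mul]
    exact (h12.mul_right (h12.star_swap hA)).add_right (h21'.mul_right h21)
  have hR : SemiconjBy (adjoint C ∘L C) (T12s * T21s) (star (T21 * T12)) := by
    rw [star_mul]
    exact h12.mul_right h21
  set u := C (T12 x1)
  set w := C (T21s x1)
  have hsplit : ⟪x0, (adjoint C ∘L C) (T12 x1)⟫_ℂ + ⟪x1, (adjoint C ∘L C) (T21 x0)⟫_ℂ =
      ⟪C x0, u⟫_ℂ + conj ⟪C x0, w⟫_ℂ := by
    rw [inner_adjoint_comp_self_apply, inner_adjoint_comp_self_apply,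
      ← inner_map_apply_eq_of_semiconjBy C h21, inner_conj_symm]
  have hdiag : ‖u‖ ^ 2 + ‖w‖ ^ 2 ≤ normA (adjoint C ∘L C) (T12s * T12 + T21 * T21s) * ‖C x1‖ ^ 2 :=
    calc ‖u‖ ^ 2 + ‖w‖ ^ 2 = RCLike.re ⟪C x1, C ((T12s * T12 + T21 * T21s) x1)⟫_ℂ := by
          rw [sq_norm_map_apply_eq_of_semiconjBy C h12, sq_norm_map_apply_eq_of_semiconjBy C h21',
            ← map_add, ← inner_add_right, ← map_add]
          rfl
      _ ≤ ‖C x1‖ * ‖C ((T12s * T12 + T21 * T21s) x1)‖ := re_inner_le_norm _ _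
      _ ≤ ‖C x1‖ * (normA (adjoint C ∘L C) (T12s * T12 + T21 * T21s) * ‖C x1‖) := by
          gcongr; exact norm_map_apply_le_normA C hS hx1
      _ = _ := by ring
  have hcross : ‖⟪u, w⟫_ℂ‖ ≤ wA (adjoint C ∘L C) (T21 * T12) * ‖C x1‖ ^ 2 := by
    rw [← inner_map_apply_eq_of_semiconjBy C h21, ← inner_conj_symm, RCLike.norm_conj,
      ← inner_adjoint_comp_self_apply]
    exact norm_inner_apply_le_wA C hR x1
  calc _ = ‖⟪C x0, u⟫_ℂ + conj ⟪C x0, w⟫_ℂ‖ ^ 2 := by rw [hsplit]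
    _ ≤ (‖⟪C x0, u⟫_ℂ‖ + ‖⟪C x0, w⟫_ℂ‖) ^ 2 := by
      gcongr
      exact (norm_add_le _ _).trans_eq (by rw [RCLike.norm_conj])
    _ ≤ ‖C x0‖ ^ 2 * (‖u‖ ^ 2 + ‖w‖ ^ 2 + 2 * ‖⟪u, w⟫_ℂ‖) := norm_inner_add_norm_inner_sq_le _ _ _
    _ ≤ _ := by
      rw [mul_assoc (‖C x0‖ ^ 2)]
      gcongr
      linarith

end Complex

/-- For `A > 0`, `B = diag(A,A)` and `T = [[0,T₁₂],[T₂₁,0]]` on `H ⊕ H`: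
`w_B(T) ≤ (1/2)√(‖T₁₂^♯T₁₂ + T₂₁T₂₁^♯‖_A + 2 w_A(T₂₁T₁₂))`. -/
theorem wB_offdiag_upper {H : Type*} [NormedAddCommGroup H] [InnerProductSpace ℂ H]
    [CompleteSpace H] (A T12 T21 T12s T21s : H →L[ℂ] H)
    (hA : ∀ x : H, x ≠ 0 → 0 < (inner ℂ x (A x) : ℂ))
    (hT12s : A.comp T12s = (ContinuousLinearMap.adjoint T12).comp A)
    (hT21s : A.comp T21s = (ContinuousLinearMap.adjoint T21).comp A)
    (B T : (PiLp 2 fun _ : Fin 2 => H) →L[ℂ] (PiLp 2 fun _ : Fin 2 => H))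
    (hB : ∀ x i, B x i = A (x i))
    (hT : ∀ x, T x 0 = T12 (x 1) ∧ T x 1 = T21 (x 0)) :
    wA B T ≤ (1/2) * Real.sqrt (normA A (T12s * T12 + T21 * T21s) + 2 * wA A (T21 * T12)) := by
  have hA0 : 0 ≤ A := ContinuousLinearMap.nonneg_of_forall_inner_apply_nonneg fun x ↦ by
    rcases eq_or_ne x 0 with rfl | hx
    · simp
    · exact (hA x hx).le
  have hdense : DenseRange A := (IsSelfAdjoint.of_nonneg hA0).denseRange_of_injective <|
    (injective_iff_map_eq_zero A).2 fun x hAx ↦ by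
      by_contra hx
      simpa [hAx] using hA x hx
  obtain ⟨C, hC⟩ : ∃ C : H →L[ℂ] H, A = ContinuousLinearMap.adjoint C ∘L C :=
    CStarAlgebra.nonneg_iff_eq_star_mul_self.mp hA0
  refine Real.sSup_le ?_ (by positivity)
  rintro _ ⟨x, hx, rfl⟩
  have hsplit : ⟪x, B (T x)⟫_ℂ = ⟪x 0, A (T12 (x 1))⟫_ℂ + ⟪x 1, A (T21 (x 0))⟫_ℂ := by
    simp only [PiLp.inner_apply, Fin.sum_univ_two, hB, hT]
  have hunit : ‖C (x 0)‖ ^ 2 + ‖C (x 1)‖ ^ 2 = 1 := by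
    simp only [PiLp.inner_apply, Fin.sum_univ_two, hB, hC, inner_adjoint_comp_self_apply,
      inner_self_eq_norm_sq_to_K] at hx
    exact Complex.ofReal_injective (by push_cast; exact hx)
  have hM : 0 ≤ normA A (T12s * T12 + T21 * T21s) + 2 * wA A (T21 * T12) :=
    add_nonneg (normA_nonneg _ _) (mul_nonneg zero_le_two (wA_nonneg _ _))
  have hamgm : ‖C (x 0)‖ ^ 2 * ‖C (x 1)‖ ^ 2 ≤ (1 / 2) ^ 2 := by
    nlinarith [sq_nonneg (‖C (x 0)‖ ^ 2 - ‖C (x 1)‖ ^ 2)]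
  rw [hsplit, ← Real.sqrt_sq (by norm_num : (0 : ℝ) ≤ 1 / 2), ← Real.sqrt_mul (by norm_num)]
  subst hC
  exact Real.le_sqrt_of_sq_le
    ((norm_inner_offDiag_sq_le C hT12s hT21s (x 0) (hdense (x 1))).trans (by gcongr))
end
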